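/- arXiv:1804.04732 — 7 statements merged into one kernel-verified Lean document; each statement's English description precedes it below -/
import Mathlib

section
/- Style-augmented cycle consistency (Proposition 4, full statement): assume the image reconstruction identities G1 (E1c x1, E1s x1) = x1 for all x1 ∈ X1 and G2 (E2c x2, E2s x2) = x2 for all x2 ∈ X2, and the latent reconstruction identities E1c (G1 (c, s1)) = c, E1s (G1 (c, s1)) = s1 for all (c, s1) ∈ C × S1 and E2c (G2 (c, s2)) = c, E2s (G2 (c, s2)) = s2 for all (c, s2) ∈ C × S2. Then F12 : X1 × S2 → X2 × S1 is a bijection and its inverse is F21, i.e. F21 ∘ F12 = id and F12 ∘ F21 = id. -/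
/-- Style-augmented cycle consistency (Proposition 4, full statement):
`F12` is a bijection with inverse `F21`. -/
theorem style_augmented_cycle_consistency
    {X1 X2 C S1 S2 : Type*}
    (E1c : X1 → C) (E2c : X2 → C) (E1s : X1 → S1) (E2s : X2 → S2)
    (G1 : C × S1 → X1) (G2 : C × S2 → X2)
    (F12 : X1 × S2 → X2 × S1) (F21 : X2 × S1 → X1 × S2)
    (hF12 : ∀ (x1 : X1) (s2 : S2), F12 (x1, s2) = (G2 (E1c x1, s2), E1s x1))
    (hF21 : ∀ (x2 : X2) (s1 : S1), F21 (x2, s1) = (G1 (E2c x2, s1), E2s x2))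
    (himg1 : ∀ x1 : X1, G1 (E1c x1, E1s x1) = x1)
    (himg2 : ∀ x2 : X2, G2 (E2c x2, E2s x2) = x2)
    (hc1 : ∀ (c : C) (s1 : S1), E1c (G1 (c, s1)) = c)
    (hs1 : ∀ (c : C) (s1 : S1), E1s (G1 (c, s1)) = s1)
    (hc2 : ∀ (c : C) (s2 : S2), E2c (G2 (c, s2)) = c)
    (hs2 : ∀ (c : C) (s2 : S2), E2s (G2 (c, s2)) = s2) :
    Function.Bijective F12 ∧ F21 ∘ F12 = id ∧ F12 ∘ F21 = id := by
  have h1 : F21 ∘ F12 = id := by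
    funext p
    obtain ⟨x1, s2⟩ := p
    simp [hF12, hF21, hc2, hs2, himg1]
  have h2 : F12 ∘ F21 = id := by
    funext p
    obtain ⟨x2, s1⟩ := p
    simp [hF12, hF21, hc1, hs1, himg2]
  refine ⟨⟨Function.LeftInverse.injective (g := F21) ?_,
    Function.RightInverse.surjective (g := F21) ?_⟩, h1, h2⟩ <;>
    intro p
  · exact congrFun h1 p
  · exact congrFun h2 p
end

section
/- The translation map F12 transports the joint image–style distribution of domain 1 onto that of domain 2: assume E1c (G1 (c, s1)) = c and E1s (G1 (c, s1)) = s1 for all (c, s1) ∈ C × S1. Then Measure.map F12 (p1.prod q2) = p2.prod q1 as probability measures on X2 × S1, where F12 (x1, s2) = (G2 (E1c x1, s2), E1s x1). -/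
open MeasureTheory

/-!
Encoding then decoding is the identity on latents, so `F12 ∘ (G1 × id)` is `(G2 × id)` composed
with the reshuffle `((c, s1), s2) ↦ ((c, s2), s1)` of `C × S1 × S2`. The reshuffle preserves the
product measure `pc ⊗ q1 ⊗ q2`, and pushing products forward along `G × id` gives `map G _ ⊗ _`.
-/

namespace MeasureTheory

variable {α β γ : Type*} [MeasurableSpace α] [MeasurableSpace β] [MeasurableSpace γ]

theorem Measure.map_prod_eq_map_prodMap_id {f : α → β} (hf : Measurable f)
    (μ : Measure α) (ν : Measure γ) [SFinite μ] [SFinite ν] :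
    (μ.map f).prod ν = (μ.prod ν).map (Prod.map f id) := by
  rw [← Measure.map_prod_map μ ν hf measurable_id, Measure.map_id]

theorem measurePreserving_prodRightComm (μa : Measure α) (μb : Measure β) (μc : Measure γ)
    [SFinite μa] [SFinite μb] [SFinite μc] :
    MeasurePreserving (fun p : (α × β) × γ => ((p.1.1, p.2), p.1.2))
      ((μa.prod μb).prod μc) ((μa.prod μc).prod μb) :=
  (measurePreserving_prodAssoc μa μc μb).symm MeasurableEquiv.prodAssoc |>.comp <|
    ((MeasurePreserving.id μa).prod Measure.measurePreserving_swap).comp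
      (measurePreserving_prodAssoc μa μb μc)

end MeasureTheory

theorem translation_map_transports_joint_distribution_general
    {X1 X2 C S1 S2 : Type*}
    [MeasurableSpace X1] [MeasurableSpace X2] [MeasurableSpace C]
    [MeasurableSpace S1] [MeasurableSpace S2]
    (E1c : X1 → C) (E1s : X1 → S1)
    (G1 : C × S1 → X1) (G2 : C × S2 → X2)
    (hE1c : Measurable E1c)
    (hE1s : Measurable E1s)
    (hG1 : Measurable G1) (hG2 : Measurable G2)
    (pc : Measure C) (q1 : Measure S1) (q2 : Measure S2)
    [IsProbabilityMeasure pc] [IsProbabilityMeasure q1] [IsProbabilityMeasure q2]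
    (hc1 : ∀ (c : C) (s1 : S1), E1c (G1 (c, s1)) = c)
    (hs1 : ∀ (c : C) (s1 : S1), E1s (G1 (c, s1)) = s1) :
    Measure.map (fun p : X1 × S2 => (G2 (E1c p.1, p.2), E1s p.1))
      ((Measure.map G1 (pc.prod q1)).prod q2)
      = (Measure.map G2 (pc.prod q2)).prod q1 := by
  set F12 := fun p : X1 × S2 => (G2 (E1c p.1, p.2), E1s p.1)
  have hshuffle := measurePreserving_prodRightComm pc q1 q2
  have hF12 : F12 ∘ Prod.map G1 id = Prod.map G2 id ∘ fun p => ((p.1.1, p.2), p.1.2) := by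
    funext ⟨⟨c, s1⟩, s2⟩
    simp [F12, hc1, hs1]
  have hF12_meas : Measurable F12 := by fun_prop
  calc ((Measure.map G1 (pc.prod q1)).prod q2).map F12
      = ((pc.prod q1).prod q2).map (F12 ∘ Prod.map G1 id) := by
        rw [Measure.map_prod_eq_map_prodMap_id hG1,
          Measure.map_map hF12_meas (hG1.prodMap measurable_id)]
    _ = ((pc.prod q2).prod q1).map (Prod.map G2 id) := by
        rw [hF12, ← Measure.map_map (hG2.prodMap measurable_id) hshuffle.measurable,
          hshuffle.map_eq]
    _ = (Measure.map G2 (pc.prod q2)).prod q1 :=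
        (Measure.map_prod_eq_map_prodMap_id hG2 _ _).symm

/-- The translation map `F12` transports the joint image–style distribution of
domain 1 onto that of domain 2. -/
theorem translation_map_transports_joint_distribution
    {X1 X2 C S1 S2 : Type*}
    [MeasurableSpace X1] [MeasurableSpace X2] [MeasurableSpace C]
    [MeasurableSpace S1] [MeasurableSpace S2]
    (E1c : X1 → C) (E2c : X2 → C) (E1s : X1 → S1) (E2s : X2 → S2)
    (G1 : C × S1 → X1) (G2 : C × S2 → X2)
    (hE1c : Measurable E1c) (hE2c : Measurable E2c)
    (hE1s : Measurable E1s) (hE2s : Measurable E2s)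
    (hG1 : Measurable G1) (hG2 : Measurable G2)
    (pc : Measure C) (q1 : Measure S1) (q2 : Measure S2)
    [IsProbabilityMeasure pc] [IsProbabilityMeasure q1] [IsProbabilityMeasure q2]
    (hc1 : ∀ (c : C) (s1 : S1), E1c (G1 (c, s1)) = c)
    (hs1 : ∀ (c : C) (s1 : S1), E1s (G1 (c, s1)) = s1) :
    Measure.map (fun p : X1 × S2 => (G2 (E1c p.1, p.2), E1s p.1))
      ((Measure.map G1 (pc.prod q1)).prod q2)
      = (Measure.map G2 (pc.prod q2)).prod q1 :=
  translation_map_transports_joint_distribution_general E1c E1s G1 G2 hE1c hE1s hG1 hG2 pc q1 q2 hc1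
    hs1
end

section
/- Joint distribution matching (Proposition 3): assume E1c (G1 (c, s1)) = c for all (c, s1) ∈ C × S1 and E2c (G2 (c, s2)) = c for all (c, s2) ∈ C × S2. Define the joint translation maps Φ1 : X1 × S2 → X1 × X2, Φ1 (x1, s2) = (x1, G2 (E1c x1, s2)), and Φ2 : X2 × S1 → X1 × X2, Φ2 (x2, s1) = (G1 (E2c x2, s1), x2). Then the two joint distributions coincide: Measure.map Φ1 (p1.prod q2) = Measure.map Φ2 (p2.prod q1) as measures on X1 × X2. -/
/-!
Both joint distributions are the push-forward of `pc ⊗ q1 ⊗ q2` under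
`(c, s1, s2) ↦ (G1 (c, s1), G2 (c, s2))`: a sample `x1 = G1 (c, s1)` of `p1` has content
`E1c x1 = c`, so translating it with an independent style `s2` produces `G2 (c, s2)`, and
symmetrically for `p2`.
-/

open MeasureTheory

namespace MeasureTheory.Measure

variable {α β γ X Y : Type*} [MeasurableSpace α] [MeasurableSpace β] [MeasurableSpace γ]
  [MeasurableSpace X] [MeasurableSpace Y]

theorem map_prod_map_left_eq_map_prod_prod (μ : Measure α) (ν : Measure β) (ρ : Measure γ)
    [SFinite μ] [SFinite ν] [SFinite ρ] {f : α × β → X} {Φ : X × γ → Y}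
    (hf : Measurable f) (hΦ : Measurable Φ) :
    (((μ.prod ν).map f).prod ρ).map Φ =
      (μ.prod (ν.prod ρ)).map fun x => Φ (f (x.1, x.2.1), x.2.2) := by
  rw [← map_id (μ := ρ), map_prod_map _ _ hf measurable_id, map_id,
    ← (measurePreserving_prodAssoc μ ν ρ).symm.map_eq, map_map (hf.prodMap measurable_id)
      MeasurableEquiv.prodAssoc.symm.measurable, map_map hΦ (by fun_prop)]
  rfl

theorem map_prodMap_id_swap (μ : Measure α) (ν : Measure β) (ρ : Measure γ)
    [SFinite μ] [SFinite ν] [SFinite ρ] :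
    (μ.prod (ν.prod ρ)).map (Prod.map id Prod.swap) = μ.prod (ρ.prod ν) := by
  rw [← map_prod_map _ _ measurable_id measurable_swap, map_id, prod_swap]

end MeasureTheory.Measure

theorem joint_distribution_matching_general
    {X1 X2 C S1 S2 : Type*}
    [MeasurableSpace X1] [MeasurableSpace X2] [MeasurableSpace C]
    [MeasurableSpace S1] [MeasurableSpace S2]
    (E1c : X1 → C) (E2c : X2 → C)
    (G1 : C × S1 → X1) (G2 : C × S2 → X2)
    (hE1c : Measurable E1c) (hE2c : Measurable E2c)
    (hG1 : Measurable G1) (hG2 : Measurable G2)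
    (pc : Measure C) (q1 : Measure S1) (q2 : Measure S2)
    [IsProbabilityMeasure pc] [IsProbabilityMeasure q1] [IsProbabilityMeasure q2]
    (hc1 : ∀ (c : C) (s1 : S1), E1c (G1 (c, s1)) = c)
    (hc2 : ∀ (c : C) (s2 : S2), E2c (G2 (c, s2)) = c) :
    Measure.map (fun p : X1 × S2 => (p.1, G2 (E1c p.1, p.2)))
      ((Measure.map G1 (pc.prod q1)).prod q2)
      = Measure.map (fun p : X2 × S1 => (G1 (E2c p.1, p.2), p.1))
          ((Measure.map G2 (pc.prod q2)).prod q1) := by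
  rw [Measure.map_prod_map_left_eq_map_prod_prod _ _ _ hG1 (by fun_prop),
    Measure.map_prod_map_left_eq_map_prod_prod _ _ _ hG2 (by fun_prop),
    ← Measure.map_prodMap_id_swap pc q1 q2, Measure.map_map (by fun_prop) (by fun_prop)]
  congr 1 with ⟨c, s1, s2⟩ <;> simp [hc1, hc2]

/-- Joint distribution matching (Proposition 3). -/
theorem joint_distribution_matching
    {X1 X2 C S1 S2 : Type*}
    [MeasurableSpace X1] [MeasurableSpace X2] [MeasurableSpace C]
    [MeasurableSpace S1] [MeasurableSpace S2]
    (E1c : X1 → C) (E2c : X2 → C) (E1s : X1 → S1) (E2s : X2 → S2)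
    (G1 : C × S1 → X1) (G2 : C × S2 → X2)
    (hE1c : Measurable E1c) (hE2c : Measurable E2c)
    (hE1s : Measurable E1s) (hE2s : Measurable E2s)
    (hG1 : Measurable G1) (hG2 : Measurable G2)
    (pc : Measure C) (q1 : Measure S1) (q2 : Measure S2)
    [IsProbabilityMeasure pc] [IsProbabilityMeasure q1] [IsProbabilityMeasure q2]
    (hc1 : ∀ (c : C) (s1 : S1), E1c (G1 (c, s1)) = c)
    (hc2 : ∀ (c : C) (s2 : S2), E2c (G2 (c, s2)) = c) :
    Measure.map (fun p : X1 × S2 => (p.1, G2 (E1c p.1, p.2)))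
      ((Measure.map G1 (pc.prod q1)).prod q2)
      = Measure.map (fun p : X2 × S1 => (G1 (E2c p.1, p.2), p.1))
          ((Measure.map G2 (pc.prod q2)).prod q1) :=
  joint_distribution_matching_general E1c E2c G1 G2 hE1c hE2c hG1 hG2 pc q1 q2 hc1 hc2
end

section
/- Latent content distribution matching (Proposition 2, content part): assume E1c (G1 (c, s1)) = c for all (c, s1) ∈ C × S1 and E2c (G2 (c, s2)) = c for all (c, s2) ∈ C × S2. Then the encoded content distributions of the two domains both equal the content prior and hence coincide: Measure.map E1c p1 = pc, Measure.map E2c p2 = pc, and therefore Measure.map E1c p1 = Measure.map E2c p2. -/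
open MeasureTheory

/-- Latent content distribution matching (Proposition 2, content part). -/
theorem latent_content_distribution_matching
    {X1 X2 C S1 S2 : Type*}
    [MeasurableSpace X1] [MeasurableSpace X2] [MeasurableSpace C]
    [MeasurableSpace S1] [MeasurableSpace S2]
    (E1c : X1 → C) (E2c : X2 → C) (E1s : X1 → S1) (E2s : X2 → S2)
    (G1 : C × S1 → X1) (G2 : C × S2 → X2)
    (hE1c : Measurable E1c) (hE2c : Measurable E2c)
    (hE1s : Measurable E1s) (hE2s : Measurable E2s)
    (hG1 : Measurable G1) (hG2 : Measurable G2)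
    (pc : Measure C) (q1 : Measure S1) (q2 : Measure S2)
    [IsProbabilityMeasure pc] [IsProbabilityMeasure q1] [IsProbabilityMeasure q2]
    (hc1 : ∀ (c : C) (s1 : S1), E1c (G1 (c, s1)) = c)
    (hc2 : ∀ (c : C) (s2 : S2), E2c (G2 (c, s2)) = c) :
    Measure.map E1c (Measure.map G1 (pc.prod q1)) = pc ∧
    Measure.map E2c (Measure.map G2 (pc.prod q2)) = pc ∧
    Measure.map E1c (Measure.map G1 (pc.prod q1))
      = Measure.map E2c (Measure.map G2 (pc.prod q2)) := by
  have h1 : Measure.map E1c (Measure.map G1 (pc.prod q1)) = pc := by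
    rw [Measure.map_map hE1c hG1]
    have : E1c ∘ G1 = Prod.fst := funext fun p => hc1 p.1 p.2
    rw [this, Measure.map_fst_prod, measure_univ, one_smul]
  have h2 : Measure.map E2c (Measure.map G2 (pc.prod q2)) = pc := by
    rw [Measure.map_map hE2c hG2]
    have : E2c ∘ G2 = Prod.fst := funext fun p => hc2 p.1 p.2
    rw [this, Measure.map_fst_prod, measure_univ, one_smul]
  exact ⟨h1, h2, h1.trans h2.symm⟩
end

section
/- Cycle consistency implies deterministic translations (Proposition 5): let κ : X1 → X2 and λ : X2 → X1 be Markov kernels satisfying bidirectional cycle consistency: for every x1 ∈ X1, (κ x1).bind λ = Measure.dirac x1, and for every x2 ∈ X2, (λ x2).bind κ = Measure.dirac x2. Then both kernels are deterministic and mutually inverse: there exist functions f : X1 → X2 and g : X2 → X1 such that κ x1 = Measure.dirac (f x1) for all x1, λ x2 = Measure.dirac (g x2) for all x2, g (f x1) = x1 for all x1, and f (g x2) = x2 for all x2. -/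
/-!
Integrating `lam x₂ {x₁} ≤ 1` against `κ x₁` gives `((κ x₁).bind lam) {x₁} = 1`, so `lam x₂` is the
Dirac mass at `x₁` for `κ x₁`-almost every `x₂`; fix one such `x₂ = f x₁`. Binding the other cycle
identity at `f x₁` then reads `κ x₁ = (δ x₁).bind κ = (lam (f x₁)).bind κ = δ (f x₁)`, and the two
deterministic maps so obtained invert each other because Dirac masses separate points.
-/

open MeasureTheory ProbabilityTheory

namespace MeasureTheory.Measure

variable {α β : Type*} [MeasurableSpace α] [MeasurableSpace β]

theorem eq_dirac_of_measure_singleton_eq_one [MeasurableSingletonClass α] {μ : Measure α}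
    [IsProbabilityMeasure μ] {a : α} (h : μ {a} = 1) : μ = dirac a := by
  have hfull : ∀ᵐ x ∂μ, x ∈ ({a} : Set α) := (mem_ae_iff_prob_eq_one (.singleton a)).mpr h
  calc μ = μ.restrict {a} := (restrict_eq_self_of_ae_mem hfull).symm
    _ = dirac a := by rw [restrict_singleton, h, one_smul]

theorem ae_eq_dirac_of_bind_eq_dirac [MeasurableSingletonClass α] {μ : Measure β}
    [IsProbabilityMeasure μ] {η : Kernel β α} [IsMarkovKernel η] {a : α}
    (h : μ.bind η = dirac a) : ∀ᵐ y ∂μ, η y = dirac a := by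
  have hmass : ∫⁻ y, η y {a} ∂μ = 1 := by
    rw [← bind_apply (.singleton a) η.aemeasurable, h, dirac_apply_of_mem (Set.mem_singleton a)]
  have hone : (fun y ↦ η y {a}) =ᵐ[μ] 1 :=
    ae_eq_of_ae_le_of_lintegral_le (ae_of_all _ fun _ ↦ prob_le_one) (by simp [hmass])
      aemeasurable_const (by simp [hmass])
  filter_upwards [hone] with y hy
  exact eq_dirac_of_measure_singleton_eq_one hy

end MeasureTheory.Measure

open Measure in
theorem ProbabilityTheory.Kernel.exists_eq_dirac_of_bind_eq_dirac {α β : Type*}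
    [MeasurableSpace α] [MeasurableSpace β] [MeasurableSingletonClass α]
    {κ : Kernel α β} {η : Kernel β α} [IsMarkovKernel κ] [IsMarkovKernel η] {x : α}
    (hx : (κ x).bind η = dirac x) (hη : ∀ y, (η y).bind κ = dirac y) :
    ∃ y, κ x = dirac y ∧ η y = dirac x := by
  obtain ⟨y, hy⟩ := (ae_eq_dirac_of_bind_eq_dirac hx).exists
  refine ⟨y, ?_, hy⟩
  calc κ x = (dirac x).bind κ := (dirac_bind κ.measurable x).symm
    _ = dirac y := by rw [← hy, hη]

/-- Cycle consistency implies deterministic translations (Proposition 5). -/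
theorem cycle_consistency_implies_deterministic
    {X1 X2 : Type*} [MeasurableSpace X1] [MeasurableSpace X2]
    [MeasurableSingletonClass X1] [MeasurableSingletonClass X2]
    (κ : Kernel X1 X2) (lam : Kernel X2 X1)
    [IsMarkovKernel κ] [IsMarkovKernel lam]
    (h1 : ∀ x1 : X1, (κ x1).bind (fun x2 => lam x2) = Measure.dirac x1)
    (h2 : ∀ x2 : X2, (lam x2).bind (fun x1 => κ x1) = Measure.dirac x2) :
    ∃ (f : X1 → X2) (g : X2 → X1),
      (∀ x1 : X1, κ x1 = Measure.dirac (f x1)) ∧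
      (∀ x2 : X2, lam x2 = Measure.dirac (g x2)) ∧
      (∀ x1 : X1, g (f x1) = x1) ∧
      (∀ x2 : X2, f (g x2) = x2) := by
  choose f hf using fun x1 ↦ Kernel.exists_eq_dirac_of_bind_eq_dirac (h1 x1) h2
  choose g hg using fun x2 ↦ Kernel.exists_eq_dirac_of_bind_eq_dirac (h2 x2) h1
  refine ⟨f, g, fun x1 ↦ (hf x1).1, fun x2 ↦ (hg x2).1, fun x1 ↦ ?_, fun x2 ↦ ?_⟩
  · rw [← dirac_eq_dirac_iff, ← (hg (f x1)).1, (hf x1).2]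
  · rw [← dirac_eq_dirac_iff, ← (hf (g x2)).1, (hg x2).2]
end

section
/- Optimal discriminator value, pointwise form (used to establish that max_D of the GAN loss equals 2·JSD − log 4): for all real numbers a > 0, b > 0 and every d with 0 < d < 1, a * log d + b * log (1 − d) ≤ a * log (a / (a + b)) + b * log (b / (a + b)); i.e., the function d ↦ a·log d + b·log(1 − d) on (0,1) attains its maximum at d = a/(a+b). -/
/-- Optimal discriminator value, pointwise form: the function
`d ↦ a·log d + b·log (1 − d)` on `(0,1)` attains its maximum at `d = a/(a+b)`. -/
theorem optimal_discriminator_pointwise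
    (a b d : ℝ) (ha : 0 < a) (hb : 0 < b) (hd0 : 0 < d) (hd1 : d < 1) :
    a * Real.log d + b * Real.log (1 - d)
      ≤ a * Real.log (a / (a + b)) + b * Real.log (b / (a + b)) := by
  have hab : 0 < a + b := by linarith
  have h1d : 0 < 1 - d := by linarith
  -- log x ≤ x - 1
  have key1 : Real.log d - Real.log (a / (a + b)) ≤ d * (a + b) / a - 1 := by
    have hx : 0 < d * (a + b) / a := by positivity
    have := Real.log_le_sub_one_of_pos hx
    have hlog : Real.log (d * (a + b) / a) = Real.log d - Real.log (a / (a + b)) := by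
      rw [Real.log_div (by positivity) ha.ne', Real.log_mul hd0.ne' hab.ne',
        Real.log_div ha.ne' hab.ne']
      ring
    linarith [hlog ▸ this]
  have key2 : Real.log (1 - d) - Real.log (b / (a + b)) ≤ (1 - d) * (a + b) / b - 1 := by
    have hx : 0 < (1 - d) * (a + b) / b := by positivity
    have := Real.log_le_sub_one_of_pos hx
    have hlog : Real.log ((1 - d) * (a + b) / b)
        = Real.log (1 - d) - Real.log (b / (a + b)) := by
      rw [Real.log_div (by positivity) hb.ne', Real.log_mul h1d.ne' hab.ne',
        Real.log_div hb.ne' hab.ne']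
      ring
    linarith [hlog ▸ this]
  have h1 : a * (Real.log d - Real.log (a / (a + b))) ≤ d * (a + b) - a := by
    have := mul_le_mul_of_nonneg_left key1 ha.le
    have : a * (Real.log d - Real.log (a / (a + b))) ≤ a * (d * (a + b) / a - 1) := this
    calc a * (Real.log d - Real.log (a / (a + b))) ≤ a * (d * (a + b) / a - 1) := this
      _ = d * (a + b) - a := by field_simp
  have h2 : b * (Real.log (1 - d) - Real.log (b / (a + b))) ≤ (1 - d) * (a + b) - b := by
    calc b * (Real.log (1 - d) - Real.log (b / (a + b)))
        ≤ b * ((1 - d) * (a + b) / b - 1) := mul_le_mul_of_nonneg_left key2 hb.le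
      _ = (1 - d) * (a + b) - b := by field_simp
  nlinarith [h1, h2]
end

section
/- GAN value function identity (invoked in the proof of Proposition 1): let P and Q be probability measures on a measurable space X and let m = (1/2) • P + (1/2) • Q be their midpoint measure. Then the supremum, over all measurable discriminators D : X → ℝ with 0 < D x < 1 for all x, of ∫ log (D x) dP(x) + ∫ log (1 − D x) dQ(x), equals klDiv P m + klDiv Q m − log 4, i.e. equals 2·JSD(P, Q) − log 4 where JSD(P, Q) = (1/2)·(klDiv P m + klDiv Q m) is the Jensen–Shannon divergence. -/
open MeasureTheory Real
open scoped ENNReal Classical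

/-- The Kullback–Leibler divergence between two measures (as in
`ProbabilityTheory.klDiv`, for probability measures): the integral of the
log-likelihood ratio if `μ ≪ ν` and the ratio is integrable, `⊤` otherwise. -/
noncomputable def klDiv {α : Type*} [MeasurableSpace α] (μ ν : Measure α) : EReal :=
  if μ ≪ ν ∧ Integrable (llr μ ν) μ then ((∫ x, llr μ ν x ∂μ : ℝ) : EReal) else ⊤

/-- The GAN value of a discriminator `D`:
`E_P[log D] + E_Q[log (1 − D)]`, interpreted as `⊥` (i.e. `−∞`) when the
integrals fail to be integrable. -/
noncomputable def ganValue {X : Type*} [MeasurableSpace X]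
    (P Q : Measure X) (D : X → ℝ) : EReal :=
  if Integrable (fun x => Real.log (D x)) P ∧
      Integrable (fun x => Real.log (1 - D x)) Q then
    (((∫ x, Real.log (D x) ∂P) + ∫ x, Real.log (1 - D x) ∂Q : ℝ) : EReal)
  else ⊥

/-!
Write `p`, `q` for the densities of `P`, `Q` with respect to `m`, so that `p + q = 2` `m`-a.e.
Pointwise, `d ↦ p log d + q log (1 - d)` is maximised at `d = p / (p + q)` (Gibbs' inequality),
so no discriminator beats `D* = p / (p + q)`, whose value is `klDiv P m + klDiv Q m - log 4`
because `D* = p / 2` and `1 - D* = q / 2`. The optimum `D*` may take the values `0` and `1`, but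
`(1 - ε) D* + ε / 2` is admissible, and by concavity of `log` its value is at least `1 - ε` times
that of `D*` plus `ε` times the value `2 log (1 / 2)` of the constant `1 / 2`; let `ε → 0`.
-/

open Filter Set
open scoped Topology

lemma mul_log_le_mul_log_add_sub {a t : ℝ} (ha : 0 ≤ a) (ht : 0 < t) :
    a * log t ≤ a * log a + (t - a) := by
  rcases ha.eq_or_lt with rfl | ha
  · simpa using ht.le
  have h := mul_le_mul_of_nonneg_left (log_le_sub_one_of_pos (div_pos ht ha)) ha.le
  rw [log_div ht.ne' ha.ne', mul_sub, mul_sub, mul_one, mul_div_cancel₀ _ ha.ne'] at h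
  linarith

lemma mul_log_add_mul_log_one_sub_le {p q d : ℝ} (hp : 0 ≤ p) (hq : 0 ≤ q) (hd₀ : 0 < d)
    (hd₁ : d < 1) :
    p * log d + q * log (1 - d) ≤ p * log (p / (p + q)) + q * log (q / (p + q)) := by
  rcases (add_nonneg hp hq).eq_or_lt with hs | hs
  · obtain ⟨rfl, rfl⟩ : p = 0 ∧ q = 0 := ⟨by linarith, by linarith⟩
    simp
  have hP := mul_log_le_mul_log_add_sub (div_nonneg hp hs.le) hd₀
  have hQ := mul_log_le_mul_log_add_sub (div_nonneg hq hs.le) (sub_pos.2 hd₁)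
  have key : p / (p + q) * log d + q / (p + q) * log (1 - d) ≤
      p / (p + q) * log (p / (p + q)) + q / (p + q) * log (q / (p + q)) := by
    have : p / (p + q) + q / (p + q) = 1 := by field_simp
    linarith
  have := mul_le_mul_of_nonneg_left key hs.le
  field_simp at this
  linarith

lemma convex_comb_half_mem_Icc {y ε : ℝ} (hy : y ∈ Icc 0 1) (hε₀ : 0 ≤ ε) (hε₁ : ε ≤ 1) :
    (1 - ε) * y + ε * (1 / 2) ∈ Icc (ε / 2) 1 := by
  obtain ⟨hy₀, hy₁⟩ := hy
  have := mul_le_mul_of_nonneg_left hy₁ (sub_nonneg.2 hε₁)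
  constructor <;> nlinarith [mul_nonneg (sub_nonneg.2 hε₁) hy₀]

section Integrals

variable {X : Type*} [MeasurableSpace X] {μ : Measure X}

lemma le_integral_log_convex_comb [IsProbabilityMeasure μ] {f : X → ℝ} {t c : ℝ}
    (hf_pos : ∀ᵐ x ∂μ, 0 < f x) (hf : Integrable (fun x => log (f x)) μ)
    (hg : Integrable (fun x => log ((1 - t) * f x + t * c)) μ)
    (ht₀ : 0 ≤ t) (ht₁ : t ≤ 1) (hc : 0 < c) :
    (1 - t) * ∫ x, log (f x) ∂μ + t * log c ≤ ∫ x, log ((1 - t) * f x + t * c) ∂μ := by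
  have hconcave : ∀ᵐ x ∂μ, (1 - t) * log (f x) + t * log c ≤ log ((1 - t) * f x + t * c) := by
    filter_upwards [hf_pos] with x hx
    exact strictConcaveOn_log_Ioi.concaveOn.2 hx hc (by linarith) ht₀ (by ring)
  calc (1 - t) * ∫ x, log (f x) ∂μ + t * log c
      = ∫ x, ((1 - t) * log (f x) + t * log c) ∂μ := by
        rw [integral_add (hf.const_mul _) (integrable_const _), integral_const_mul,
          integral_const, probReal_univ, one_smul]
    _ ≤ _ := integral_mono_ae ((hf.const_mul _).add (integrable_const _)) hg hconcave

lemma integrable_log_of_mem_Icc [IsFiniteMeasure μ] {f : X → ℝ} (hf : Measurable f) {c : ℝ}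
    (hc : 0 < c) (hf_mem : ∀ x, f x ∈ Icc c 1) : Integrable (fun x => log (f x)) μ := by
  refine Integrable.of_bound (measurable_log.comp hf).aestronglyMeasurable (-log c)
    (ae_of_all _ fun x => ?_)
  obtain ⟨hcx, hx1⟩ := hf_mem x
  rw [norm_eq_abs, abs_of_nonpos (log_nonpos (hc.le.trans hcx) hx1)]
  exact neg_le_neg (log_le_log hc hcx)

end Integrals

section Midpoint

variable {X : Type*} [MeasurableSpace X] (P Q : Measure X)

noncomputable def midMeasure : Measure X := (1 / 2 : ℝ≥0∞) • P + (1 / 2 : ℝ≥0∞) • Q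

lemma midMeasure_comm : midMeasure P Q = midMeasure Q P := add_comm _ _

lemma absolutelyContinuous_midMeasure : P ≪ midMeasure P Q := by
  refine Measure.AbsolutelyContinuous.mk fun s _ hs => ?_
  simp only [midMeasure, Measure.coe_add, Measure.coe_smul, Pi.add_apply, Pi.smul_apply,
    smul_eq_mul, add_eq_zero, mul_eq_zero] at hs
  simpa using hs.1

/-- The junk value `0 / 0 = 0` keeps this in `[0, 1]` everywhere, not just almost everywhere. -/
noncomputable def optimalDiscriminator (x : X) : ℝ :=
  (P.rnDeriv (midMeasure P Q) x).toReal /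
    ((P.rnDeriv (midMeasure P Q) x).toReal + (Q.rnDeriv (midMeasure P Q) x).toReal)

lemma optimalDiscriminator_swap (x : X) :
    optimalDiscriminator Q P x = (Q.rnDeriv (midMeasure P Q) x).toReal /
      ((P.rnDeriv (midMeasure P Q) x).toReal + (Q.rnDeriv (midMeasure P Q) x).toReal) := by
  rw [optimalDiscriminator, midMeasure_comm, add_comm (Q.rnDeriv _ x).toReal]

lemma measurable_optimalDiscriminator : Measurable (optimalDiscriminator P Q) := by
  unfold optimalDiscriminator
  have := P.measurable_rnDeriv (midMeasure P Q)
  have := Q.measurable_rnDeriv (midMeasure P Q)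
  fun_prop

lemma optimalDiscriminator_mem_Icc (x : X) : optimalDiscriminator P Q x ∈ Icc 0 1 :=
  ⟨div_nonneg ENNReal.toReal_nonneg (add_nonneg ENNReal.toReal_nonneg ENNReal.toReal_nonneg),
    div_le_one_of_le₀ (le_add_of_nonneg_right ENNReal.toReal_nonneg)
      (add_nonneg ENNReal.toReal_nonneg ENNReal.toReal_nonneg)⟩

variable [IsFiniteMeasure P] [IsFiniteMeasure Q]

instance : IsFiniteMeasure (midMeasure P Q) := by
  have := P.smul_finite (c := 1 / 2) (by simp)
  have := Q.smul_finite (c := 1 / 2) (by simp)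
  unfold midMeasure
  infer_instance

lemma toReal_rnDeriv_add_toReal_rnDeriv_midMeasure :
    ∀ᵐ x ∂midMeasure P Q,
      (P.rnDeriv (midMeasure P Q) x).toReal + (Q.rnDeriv (midMeasure P Q) x).toReal = 2 := by
  set m := midMeasure P Q
  have := P.smul_finite (c := 1 / 2) (by simp)
  have := Q.smul_finite (c := 1 / 2) (by simp)
  have hsum := Measure.rnDeriv_add ((1 / 2 : ℝ≥0∞) • P) ((1 / 2 : ℝ≥0∞) • Q) m
  filter_upwards [hsum, m.rnDeriv_self, P.rnDeriv_smul_left_of_ne_top m (r := 1 / 2) (by simp),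
    Q.rnDeriv_smul_left_of_ne_top m (r := 1 / 2) (by simp), P.rnDeriv_lt_top m,
    Q.rnDeriv_lt_top m] with x hsum hself hP hQ hPtop hQtop
  have h : 1 / 2 * P.rnDeriv m x + 1 / 2 * Q.rnDeriv m x = 1 := by
    rw [Pi.add_apply, hP, hQ] at hsum
    exact hsum.symm.trans hself
  have h := congrArg ENNReal.toReal h
  rw [ENNReal.toReal_add (by finiteness) (by finiteness), ENNReal.toReal_mul,
    ENNReal.toReal_mul] at h
  norm_num at h
  linarith

lemma optimalDiscriminator_ae_eq :
    optimalDiscriminator P Q =ᵐ[midMeasure P Q]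
      fun x => (P.rnDeriv (midMeasure P Q) x).toReal / 2 := by
  filter_upwards [toReal_rnDeriv_add_toReal_rnDeriv_midMeasure P Q] with x hx
  rw [optimalDiscriminator, hx]

lemma one_sub_optimalDiscriminator_ae_eq :
    (fun x => 1 - optimalDiscriminator P Q x) =ᵐ[midMeasure P Q] optimalDiscriminator Q P := by
  filter_upwards [toReal_rnDeriv_add_toReal_rnDeriv_midMeasure P Q] with x hx
  rw [optimalDiscriminator_swap P Q, optimalDiscriminator, hx]
  linarith

lemma optimalDiscriminator_pos_ae : ∀ᵐ x ∂P, 0 < optimalDiscriminator P Q x := by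
  have hPm := absolutelyContinuous_midMeasure P Q
  filter_upwards [hPm.ae_le (optimalDiscriminator_ae_eq P Q), Measure.rnDeriv_pos hPm,
    hPm.ae_le (P.rnDeriv_lt_top _)] with x hD hpos htop
  rw [hD]
  exact half_pos (ENNReal.toReal_pos hpos.ne' htop.ne)

lemma llr_midMeasure_ae_eq :
    llr P (midMeasure P Q) =ᵐ[P] fun x => log (optimalDiscriminator P Q x) + log 2 := by
  have hPm := absolutelyContinuous_midMeasure P Q
  filter_upwards [hPm.ae_le (optimalDiscriminator_ae_eq P Q), optimalDiscriminator_pos_ae P Q]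
    with x hD hpos
  rw [hD] at hpos ⊢
  rw [llr_def, log_div (by linarith) two_ne_zero]
  ring

lemma integrable_log_optimalDiscriminator :
    Integrable (fun x => log (optimalDiscriminator P Q x)) P := by
  rw [← integrable_rnDeriv_smul_iff (absolutelyContinuous_midMeasure P Q)]
  refine Integrable.of_bound ((P.measurable_rnDeriv _).ennreal_toReal.smul
    (measurable_log.comp (measurable_optimalDiscriminator P Q))).aestronglyMeasurable 2 ?_
  filter_upwards [optimalDiscriminator_ae_eq P Q,
    toReal_rnDeriv_add_toReal_rnDeriv_midMeasure P Q] with x hD hsum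
  set p := (P.rnDeriv (midMeasure P Q) x).toReal
  have hy₀ : 0 ≤ p / 2 := by positivity
  have hy₁ : p / 2 ≤ 1 := by linarith [(Q.rnDeriv (midMeasure P Q) x).toReal_nonneg]
  rw [smul_eq_mul, hD, norm_eq_abs, show p * log (p / 2) = -2 * negMulLog (p / 2) by
    rw [negMulLog]; ring, abs_mul, abs_of_nonneg (negMulLog_nonneg hy₀ hy₁)]
  linarith [negMulLog_le_one_sub_self hy₀]

lemma integral_log_add_integral_log_one_sub_le {D : X → ℝ} (hD : ∀ x, 0 < D x ∧ D x < 1)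
    (hP : Integrable (fun x => log (D x)) P) (hQ : Integrable (fun x => log (1 - D x)) Q) :
    ∫ x, log (D x) ∂P + ∫ x, log (1 - D x) ∂Q ≤
      ∫ x, log (optimalDiscriminator P Q x) ∂P + ∫ x, log (optimalDiscriminator Q P x) ∂Q := by
  have hPm := absolutelyContinuous_midMeasure P Q
  have hQm : Q ≪ midMeasure P Q := midMeasure_comm Q P ▸ absolutelyContinuous_midMeasure Q P
  have hPD := (integrable_rnDeriv_smul_iff hPm).2 hP
  have hQD := (integrable_rnDeriv_smul_iff hQm).2 hQ
  have hPopt := (integrable_rnDeriv_smul_iff hPm).2 (integrable_log_optimalDiscriminator P Q)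
  have hQopt := (integrable_rnDeriv_smul_iff hQm).2 (integrable_log_optimalDiscriminator Q P)
  rw [← integral_rnDeriv_smul hPm, ← integral_rnDeriv_smul hQm, ← integral_rnDeriv_smul hPm,
    ← integral_rnDeriv_smul hQm, ← integral_add hPD hQD, ← integral_add hPopt hQopt]
  refine integral_mono_ae (hPD.add hQD) (hPopt.add hQopt) (ae_of_all _ fun x => ?_)
  simp only [smul_eq_mul]
  rw [optimalDiscriminator_swap P Q, optimalDiscriminator]
  exact mul_log_add_mul_log_one_sub_le ENNReal.toReal_nonneg ENNReal.toReal_nonneg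
    (hD x).1 (hD x).2

end Midpoint

lemma klDiv_midMeasure_eq {X : Type*} [MeasurableSpace X] (P Q : Measure X)
    [IsProbabilityMeasure P] [IsFiniteMeasure Q] :
    klDiv P (midMeasure P Q) =
      ((∫ x, log (optimalDiscriminator P Q x) ∂P + log 2 : ℝ) : EReal) := by
  have hllr := llr_midMeasure_ae_eq P Q
  have hint := integrable_log_optimalDiscriminator P Q
  rw [klDiv, if_pos ⟨absolutelyContinuous_midMeasure P Q,
    (hint.add (integrable_const _)).congr hllr.symm⟩, integral_congr_ae hllr,
    integral_add hint (integrable_const _), integral_const]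
  simp

lemma exists_le_ganValue {X : Type*} [MeasurableSpace X] (P Q : Measure X)
    [IsProbabilityMeasure P] [IsProbabilityMeasure Q] {ε : ℝ} (hε₀ : 0 < ε) (hε₁ : ε ≤ 1) :
    ∃ D : X → ℝ, (Measurable D ∧ ∀ x, 0 < D x ∧ D x < 1) ∧
      (((1 - ε) * (∫ x, log (optimalDiscriminator P Q x) ∂P +
        ∫ x, log (optimalDiscriminator Q P x) ∂Q) + ε * (2 * log (1 / 2)) : ℝ) : EReal) ≤
      ganValue P Q D := by
  set D := fun x => (1 - ε) * optimalDiscriminator P Q x + ε * (1 / 2)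
  have hQm : Q ≪ midMeasure P Q := midMeasure_comm Q P ▸ absolutelyContinuous_midMeasure Q P
  have hDm : Measurable D := by
    have := measurable_optimalDiscriminator P Q
    fun_prop
  have hD (x : X) : D x ∈ Icc (ε / 2) 1 :=
    convex_comb_half_mem_Icc (optimalDiscriminator_mem_Icc P Q x) hε₀.le hε₁
  have hD' (x : X) : 1 - D x ∈ Icc (ε / 2) 1 := by
    obtain ⟨h₀, h₁⟩ := optimalDiscriminator_mem_Icc P Q x
    convert convex_comb_half_mem_Icc (y := 1 - optimalDiscriminator P Q x)
      ⟨by linarith, by linarith⟩ hε₀.le hε₁ using 1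
    ring
  have hPint := integrable_log_of_mem_Icc (μ := P) hDm (half_pos hε₀) hD
  have hQint := integrable_log_of_mem_Icc (μ := Q) (measurable_const.sub hDm) (half_pos hε₀) hD'
  have hQ_eq : (fun x => log (1 - D x)) =ᵐ[Q]
      fun x => log ((1 - ε) * optimalDiscriminator Q P x + ε * (1 / 2)) := by
    filter_upwards [hQm.ae_le (one_sub_optimalDiscriminator_ae_eq P Q)] with x hx
    rw [← hx]
    congr 1
    ring
  refine ⟨D, ⟨hDm, fun x => ⟨(half_pos hε₀).trans_le (hD x).1, ?_⟩⟩, ?_⟩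
  · linarith [(half_pos hε₀).trans_le (hD' x).1]
  rw [ganValue, if_pos ⟨hPint, hQint⟩, integral_congr_ae hQ_eq]
  have hPle := le_integral_log_convex_comb (optimalDiscriminator_pos_ae P Q)
    (integrable_log_optimalDiscriminator P Q) hPint hε₀.le hε₁ one_half_pos
  have hQle := le_integral_log_convex_comb (optimalDiscriminator_pos_ae Q P)
    (integrable_log_optimalDiscriminator Q P) (hQint.congr hQ_eq) hε₀.le hε₁ one_half_pos
  exact EReal.coe_le_coe_iff.2 (by linarith)

/-- GAN value function identity: the supremum over all measurable
discriminators with values in `(0,1)` of the GAN value equals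
`klDiv P m + klDiv Q m − log 4 = 2·JSD(P,Q) − log 4`, where
`m = (1/2) • P + (1/2) • Q`. -/
theorem gan_value_function_identity
    {X : Type*} [MeasurableSpace X] (P Q : Measure X)
    [IsProbabilityMeasure P] [IsProbabilityMeasure Q] :
    (⨆ D : {D : X → ℝ // Measurable D ∧ ∀ x, 0 < D x ∧ D x < 1},
        ganValue P Q D.1)
      = klDiv P ((1 / 2 : ℝ≥0∞) • P + (1 / 2 : ℝ≥0∞) • Q)
        + klDiv Q ((1 / 2 : ℝ≥0∞) • P + (1 / 2 : ℝ≥0∞) • Q)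
        - (Real.log 4 : EReal) := by
  set J := ∫ x, log (optimalDiscriminator P Q x) ∂P + ∫ x, log (optimalDiscriminator Q P x) ∂Q
    with hJ_def
  have hJ : klDiv P (midMeasure P Q) + klDiv Q (midMeasure P Q) - (log 4 : EReal) = J := by
    rw [klDiv_midMeasure_eq, midMeasure_comm, klDiv_midMeasure_eq,
      show (4 : ℝ) = 2 ^ 2 by norm_num, log_pow]
    norm_cast
    rw [hJ_def]
    ring
  change _ = klDiv P (midMeasure P Q) + klDiv Q (midMeasure P Q) - _
  rw [hJ]
  refine le_antisymm (iSup_le fun ⟨D, _, hD⟩ => ?_) ?_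
  · rw [ganValue]
    split_ifs with h
    · exact EReal.coe_le_coe_iff.2 (integral_log_add_integral_log_one_sub_le P Q hD h.1 h.2)
    · exact bot_le
  have hlim : Tendsto (fun ε : ℝ => (((1 - ε) * J + ε * (2 * log (1 / 2)) : ℝ) : EReal))
      (𝓝[>] 0) (𝓝 (J : EReal)) := by
    refine EReal.tendsto_coe.2 (tendsto_nhdsWithin_of_tendsto_nhds ?_)
    exact Continuous.tendsto' (by fun_prop) _ _ (by simp)
  refine le_of_tendsto hlim ?_
  filter_upwards [Ioc_mem_nhdsGT one_pos] with ε ⟨hε₀, hε₁⟩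
  obtain ⟨D, hD, hle⟩ := exists_le_ganValue P Q hε₀ hε₁
  exact hle.trans (le_iSup_of_le ⟨D, hD⟩ le_rfl)
end
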